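/- Let m ≥ 1 and let ξ_1, ..., ξ_m ∈ ℂ satisfy ξ_j^m = 1 for each j. Let ω ∈ ℝ^d, α_1, ..., α_m ∈ ℂ, and v(x) = Σ_{j=1}^m α_j e^{i ξ_j ω·x}. Then pointwise on ℝ^d one has Σ_{j_1,...,j_m=1}^d |∂^m v/∂x_{j_1}⋯∂x_{j_m}|² = |ω|^{2m} |v|². -/

import Mathlib

open MeasureTheory

noncomputable section

/-- Euclidean space `ℝ^d`. -/
abbrev Euc (d : ℕ) := EuclideanSpace ℝ (Fin d)

/-- Partial derivative in the `j`-th coordinate direction. -/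
def pderivI {d : ℕ} (j : Fin d) (u : Euc d → ℂ) : Euc d → ℂ :=
  fun x => fderiv ℝ u x (EuclideanSpace.single j 1)

/-- Iterated partial derivative `∂^m u/∂x_{j_1}⋯∂x_{j_m}` along a list of directions. -/
def pderivSeq {d : ℕ} (js : List (Fin d)) (u : Euc d → ℂ) : Euc d → ℂ :=
  js.foldr pderivI u

/-- The Laplacian `Δu = Σ_{i=1}^d ∂²u/∂x_i²`. -/
def lap {d : ℕ} (u : Euc d → ℂ) : Euc d → ℂ :=
  fun x => ∑ i : Fin d, pderivI i (pderivI i u) x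

/-- The operator `-Δ`; its `m`-fold iterate `negLap^[m]` is `(-Δ)^m`. -/
def negLap {d : ℕ} (u : Euc d → ℂ) : Euc d → ℂ :=
  fun x => -(lap u x)

/-- The exponential function `x ↦ e^{ζ ω·x}`, where `ω·x = Σ_i ω_i x_i`. -/
def expFun {d : ℕ} (ζ : ℂ) (ω : Euc d) : Euc d → ℂ :=
  fun x => Complex.exp (ζ * ((∑ i : Fin d, ω i * x i : ℝ) : ℂ))

/-!
Each partial derivative `∂_k` multiplies `e^{ζ ω·x}` by `ζ ω_k`, so `∂_{j_1}⋯∂_{j_m}` multiplies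
it by `ζ^m ω_{j_1}⋯ω_{j_m}`. For `ζ = i ξ_j` with `ξ_j^m = 1` this factor is `i^m ω_{j_1}⋯ω_{j_m}`
for every `j`, so the whole sum `v` is multiplied by it. Hence
`|∂^m v/∂x_{j_1}⋯∂x_{j_m}|² = ω_{j_1}²⋯ω_{j_m}² |v|²`, and summing over all multi-indices gives
`(Σ_i ω_i²)^m |v|² = |ω|^{2m} |v|²`.
-/

section

variable {d : ℕ}

lemma hasFDerivAt_expFun (ζ : ℂ) (ω x : Euc d) :
    HasFDerivAt (expFun ζ ω) ((ζ * expFun ζ ω x) • Complex.ofRealCLM.comp (innerSL ℝ ω)) x := by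
  have hlin : HasFDerivAt (fun y : Euc d => ζ * ((∑ i : Fin d, ω i * y i : ℝ) : ℂ))
      (ζ • Complex.ofRealCLM.comp (innerSL ℝ ω)) x := by
    convert (ζ • Complex.ofRealCLM.comp (innerSL ℝ ω)).hasFDerivAt using 1
    ext y
    simp [PiLp.inner_apply, mul_comm]
  rw [mul_comm, ← smul_smul]
  exact (Complex.hasDerivAt_exp _).comp_hasFDerivAt x hlin

lemma pderivI_expFun_sum {ι : Type*} [Fintype ι] (c ζ : ι → ℂ) (ω : Euc d) (k : Fin d) :
    pderivI k (fun x => ∑ j, c j * expFun (ζ j) ω x)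
      = fun x => ∑ j, c j * (ζ j * ω k) * expFun (ζ j) ω x := by
  funext x
  have hsum : HasFDerivAt (fun x => ∑ j, c j * expFun (ζ j) ω x)
      (∑ j, c j • (ζ j * expFun (ζ j) ω x) • Complex.ofRealCLM.comp (innerSL ℝ ω)) x :=
    HasFDerivAt.fun_sum fun j _ => (hasFDerivAt_expFun (ζ j) ω x).const_mul (c j)
  rw [pderivI, hsum.fderiv, _root_.sum_apply]
  refine Finset.sum_congr rfl fun j _ => ?_
  simp only [smul_apply, ContinuousLinearMap.comp_apply, coe_innerSL_apply,
    EuclideanSpace.inner_single_right, Real.ringHom_apply, one_mul, Complex.ofRealCLM_apply,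
    smul_eq_mul]
  ring

lemma pderivSeq_expFun_sum {ι : Type*} [Fintype ι] (c ζ : ι → ℂ) (ω : Euc d)
    (js : List (Fin d)) :
    pderivSeq js (fun x => ∑ j, c j * expFun (ζ j) ω x)
      = fun x => ∑ j, c j * (js.map fun k => ζ j * ω k).prod * expFun (ζ j) ω x := by
  induction js with
  | nil => simp [pderivSeq]
  | cons k t ih =>
    change pderivI k (pderivSeq t _) = _
    rw [ih, pderivI_expFun_sum]
    funext x
    simp only [List.map_cons, List.prod_cons]
    exact Finset.sum_congr rfl fun j _ => by ring

lemma pderivSeq_ofFn_expFun_sum_of_pow_eq {ι : Type*} [Fintype ι] {m : ℕ} (c ζ : ι → ℂ)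
    {z : ℂ} (hζ : ∀ j, ζ j ^ m = z) (ω : Euc d) (js : Fin m → Fin d) (x : Euc d) :
    pderivSeq (List.ofFn js) (fun x => ∑ j, c j * expFun (ζ j) ω x) x
      = z * (∏ k, ω (js k) : ℝ) * ∑ j, c j * expFun (ζ j) ω x := by
  rw [pderivSeq_expFun_sum, Finset.mul_sum]
  refine Finset.sum_congr rfl fun j _ => ?_
  simp only [List.map_ofFn, List.prod_ofFn, Function.comp_def, Finset.prod_mul_distrib,
    Finset.prod_const, Finset.card_univ, Fintype.card_fin, hζ j]
  push_cast
  ring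

end

theorem hessian_energy_of_expFun_sum_general
    (d m : ℕ) (ξ : Fin m → ℂ) (hξ : ∀ j, ξ j ^ m = 1)
    (ω : Euc d) (α : Fin m → ℂ)
    (v : Euc d → ℂ) (hv : v = fun x => ∑ j : Fin m, α j * expFun (Complex.I * ξ j) ω x) :
    ∀ x : Euc d, ∑ js : Fin m → Fin d, ‖pderivSeq (List.ofFn js) v x‖ ^ 2
      = ‖ω‖ ^ (2 * m) * ‖v x‖ ^ 2 := by
  intro x
  have hpow : ∀ j, (Complex.I * ξ j) ^ m = Complex.I ^ m := fun j => by rw [mul_pow, hξ, mul_one]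
  have hnormsq : ∀ js : Fin m → Fin d,
      ‖pderivSeq (List.ofFn js) v x‖ ^ 2 = (∏ k, ω (js k) ^ 2) * ‖v x‖ ^ 2 := fun js => by
    rw [hv, pderivSeq_ofFn_expFun_sum_of_pow_eq α _ hpow, norm_mul, norm_mul, norm_pow,
      Complex.norm_I, one_pow, one_mul, Complex.norm_real, Real.norm_eq_abs, mul_pow, sq_abs,
      Finset.prod_pow]
  simp only [hnormsq, ← Finset.sum_mul, pow_mul, EuclideanSpace.real_norm_sq_eq]
  rw [Fintype.sum_pow]

/-- If `ξ_1, …, ξ_m` satisfy `ξ_j^m = 1` and `v = Σ_j α_j e^{i ξ_j ω·x}`, then pointwise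
`Σ_{j_1,…,j_m} |∂^m v/∂x_{j_1}⋯∂x_{j_m}|² = |ω|^{2m} |v|²`. -/
theorem hessian_energy_of_expFun_sum
    (d m : ℕ) (hm : 1 ≤ m) (ξ : Fin m → ℂ) (hξ : ∀ j, ξ j ^ m = 1)
    (ω : Euc d) (α : Fin m → ℂ)
    (v : Euc d → ℂ) (hv : v = fun x => ∑ j : Fin m, α j * expFun (Complex.I * ξ j) ω x) :
    ∀ x : Euc d, ∑ js : Fin m → Fin d, ‖pderivSeq (List.ofFn js) v x‖ ^ 2
      = ‖ω‖ ^ (2 * m) * ‖v x‖ ^ 2 :=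
  hessian_energy_of_expFun_sum_general d m ξ hξ ω α v hv
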